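/- arXiv:1405.4988 — 2 statements merged into one kernel-verified Lean document; each statement's English description precedes it below -/
import Mathlib

section
/- Suppose that matrices A and B in M_2(ℝ) satisfy AB ≥ BA ≥ 0 (entrywise). Then AB − BA lies in the radical of the algebra generated by A and B; concretely, for every matrix C in the unital subalgebra of M_2(ℝ) generated by A and B, the matrix C(AB − BA) is nilpotent. -/
/-!
Let `D = AB - BA`. Since `AB` and `BA` have the same trace and `BA ≤ AB` entrywise, the diagonal
of `D` vanishes; then `det (AB) = det (BA)` expands to a sum of nonnegative terms equal to zero,
which forces `det D = 0`. So `D² = 0`, and for `2 × 2` matrices this gives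
`D Z D = tr (Z D) • D`.
The condition `tr (C D) = 0` holds for `C = A, B` by cyclicity of the trace and is stable under
products, so it holds on the whole algebra generated by `A` and `B`; for such `C` we get
`(C D)² = C (D C D) = 0`.
-/

namespace Matrix

section CommRing

variable {R : Type*} [CommRing R]

theorem trace_mul_commutator_left {n : Type*} [Fintype n] (X Y : Matrix n n R) :
    (X * (X * Y - Y * X)).trace = 0 := by
  rw [mul_sub, trace_sub, ← trace_mul_cycle', sub_self]

theorem trace_mul_commutator_right {n : Type*} [Fintype n] (X Y : Matrix n n R) :
    (Y * (X * Y - Y * X)).trace = 0 := by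
  rw [mul_sub, trace_sub, trace_mul_cycle', sub_self]

/-- The polarized Cayley–Hamilton identity for `2 × 2` matrices, in the case `tr D = 0`. -/
theorem mul_add_mul_eq_of_trace_eq_zero {Z D : Matrix (Fin 2) (Fin 2) R} (htr : D.trace = 0) :
    Z * D + D * Z = Z.trace • D + (Z * D).trace • 1 := by
  rw [trace_fin_two] at htr
  ext i j
  fin_cases i <;> fin_cases j <;>
    simp only [Fin.zero_eta, Fin.mk_one, Fin.isValue, add_apply, mul_apply, Fin.sum_univ_two,
      trace_fin_two, smul_apply, smul_eq_mul, one_apply_eq, one_apply_ne', ne_eq, zero_ne_one,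
      one_ne_zero, not_false_eq_true] <;> grind

theorem mul_mul_eq_trace_mul_smul {Z D : Matrix (Fin 2) (Fin 2) R} (htr : D.trace = 0)
    (hdet : D.det = 0) : D * Z * D = (Z * D).trace • D := by
  rw [trace_fin_two] at htr
  rw [det_fin_two] at hdet
  ext i j
  fin_cases i <;> fin_cases j <;>
    simp only [Fin.zero_eta, Fin.mk_one, Fin.isValue, mul_apply, Fin.sum_univ_two, trace_fin_two,
      smul_apply, smul_eq_mul] <;> grind

variable {D : Matrix (Fin 2) (Fin 2) R}

/-- For `D ≠ 0` with `D² = 0`, `tr (X D) = 0` says that `X` preserves the line `ker D = im D`. -/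
theorem trace_mul_eq_zero_of_mem_adjoin [NoZeroDivisors R] (htr : D.trace = 0)
    (hdet : D.det = 0)
    {S : Set (Matrix (Fin 2) (Fin 2) R)} (hS : ∀ X ∈ S, (X * D).trace = 0)
    {C : Matrix (Fin 2) (Fin 2) R} (hC : C ∈ Algebra.adjoin R S) : (C * D).trace = 0 := by
  induction hC using Algebra.adjoin_induction with
  | mem X hX => exact hS X hX
  | algebraMap r =>
    rw [Algebra.algebraMap_eq_smul_one, smul_mul_assoc, one_mul, trace_smul, htr, smul_zero]
  | add X Y _ _ hX hY => rw [add_mul, trace_add, hX, hY, add_zero]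
  | mul X Y _ _ hX hY =>
    rcases eq_or_ne D 0 with rfl | hD
    · rw [Matrix.mul_zero, trace_zero]
    have hDX : D * X = X.trace • D - X * D := by
      rw [eq_sub_iff_add_eq, add_comm, mul_add_mul_eq_of_trace_eq_zero htr, hX, zero_smul, add_zero]
    have hDYD : D * Y * D = 0 := by rw [mul_mul_eq_trace_mul_smul htr hdet, hY, zero_smul]
    have : (X * Y * D).trace • D = 0 :=
      calc (X * Y * D).trace • D = D * X * (Y * D) := by
            rw [← mul_mul_eq_trace_mul_smul htr hdet, Matrix.mul_assoc, Matrix.mul_assoc,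
              Matrix.mul_assoc]
        _ = X.trace • (D * Y * D) - X * (D * Y * D) := by
            simp only [hDX, sub_mul, smul_mul_assoc, Matrix.mul_assoc]
        _ = 0 := by rw [hDYD, smul_zero, Matrix.mul_zero, sub_zero]
    exact (smul_eq_zero.mp this).resolve_right hD

theorem isNilpotent_mul_of_trace_mul_eq_zero (htr : D.trace = 0) (hdet : D.det = 0)
    {C : Matrix (Fin 2) (Fin 2) R} (hC : (C * D).trace = 0) : IsNilpotent (C * D) :=
  ⟨2, by
    rw [pow_two, Matrix.mul_assoc, ← Matrix.mul_assoc D, mul_mul_eq_trace_mul_smul htr hdet, hC,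
      zero_smul, Matrix.mul_zero]⟩

theorem isNilpotent_mul_commutator_of_det_eq_zero [NoZeroDivisors R]
    {A B : Matrix (Fin 2) (Fin 2) R}
    (hdet : (A * B - B * A).det = 0) :
    ∀ C ∈ Algebra.adjoin R {A, B}, IsNilpotent (C * (A * B - B * A)) := by
  have htr : (A * B - B * A).trace = 0 := by rw [trace_sub, trace_mul_comm, sub_self]
  have hgen : ∀ X ∈ ({A, B} : Set _), (X * (A * B - B * A)).trace = 0 := by
    rintro X (rfl | rfl)
    exacts [trace_mul_commutator_left X B, trace_mul_commutator_right A X]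
  exact fun C hC ↦ isNilpotent_mul_of_trace_mul_eq_zero htr hdet
    (trace_mul_eq_zero_of_mem_adjoin htr hdet hgen hC)

end CommRing

theorem diag_eq_of_diag_le_of_trace_eq {n R : Type*} [Fintype n] [AddCommMonoid R]
    [PartialOrder R] [IsOrderedCancelAddMonoid R] {X Y : Matrix n n R}
    (hle : ∀ i, X i i ≤ Y i i) (htr : X.trace = Y.trace) (i : n) : X i i = Y i i :=
  (Finset.sum_eq_sum_iff_of_le fun i _ ↦ hle i).mp htr i (Finset.mem_univ i)

section LinearOrderedRing

variable {R : Type*} [CommRing R] [LinearOrder R] [IsStrictOrderedRing R]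

theorem det_sub_eq_zero_of_le_of_det_eq {X Y : Matrix (Fin 2) (Fin 2) R}
    (hX : ∀ i j, 0 ≤ X i j) (hle : ∀ i j, X i j ≤ Y i j) (htr : X.trace = Y.trace)
    (hdet : X.det = Y.det) : (Y - X).det = 0 := by
  have hp := sub_nonneg.2 (hle 0 1)
  have hq := sub_nonneg.2 (hle 1 0)
  have h00 := diag_eq_of_diag_le_of_trace_eq (fun i ↦ hle i i) htr 0
  have h11 := diag_eq_of_diag_le_of_trace_eq (fun i ↦ hle i i) htr 1
  rw [det_fin_two, det_fin_two, h00, h11] at hdet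
  have hsum : X 0 1 * (Y 1 0 - X 1 0) + X 1 0 * (Y 0 1 - X 0 1)
      + (Y 0 1 - X 0 1) * (Y 1 0 - X 1 0) = 0 := by
    linear_combination hdet
  have hpq := ((add_eq_zero_iff_of_nonneg (add_nonneg (mul_nonneg (hX 0 1) hq)
    (mul_nonneg (hX 1 0) hp)) (mul_nonneg hp hq)).mp hsum).2
  rw [det_fin_two]
  simp only [sub_apply, h00, h11, sub_self, zero_mul, hpq]

end LinearOrderedRing

end Matrix

/-- If `A, B ∈ M₂(ℝ)` satisfy `AB ≥ BA ≥ 0` entrywise, then `AB − BA` lies in the radical of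
the algebra generated by `A` and `B`: for every `C` in the unital subalgebra generated by
`A` and `B`, the matrix `C(AB − BA)` is nilpotent. -/
theorem two_by_two_commutator_in_radical
    (A B : Matrix (Fin 2) (Fin 2) ℝ)
    (hBA : ∀ i j, 0 ≤ (B * A) i j)
    (hAB : ∀ i j, (B * A) i j ≤ (A * B) i j) :
    ∀ C ∈ Algebra.adjoin ℝ ({A, B} : Set (Matrix (Fin 2) (Fin 2) ℝ)),
      IsNilpotent (C * (A * B - B * A)) :=
  Matrix.isNilpotent_mul_commutator_of_det_eq_zero <|
    Matrix.det_sub_eq_zero_of_le_of_det_eq hBA hAB (Matrix.trace_mul_comm B A)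
      (by rw [Matrix.det_mul, Matrix.det_mul, mul_comm])
end

section
/- Let S be a Donoghue operator on ℓ², i.e., S e₀ = 0 and S eₙ = wₙ eₙ₋₁ for n ≥ 1, where (wₙ)_{n≥1} are positive, monotone decreasing and square-summable weights. Then S lies in the radical of the Banach algebra generated by ⟨S] ∪ [S⟩; concretely, for every operator C in the closed unital subalgebra of bounded operators on ℓ² generated by the set {T positive : TS ≥ ST or ST ≥ TS}, the operator CS is quasinilpotent. -/
/-!
A positive operator `T` semi-commuting with `S` is upper triangular. For its matrix entries
`t k i`, the inequality `ST ≤ TS` gives `w (k+1) t (k+1) 0 ≤ 0` and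
`w (k+1) t (k+1) (i+1) ≤ w (i+1) t k i`, which kill the entries below the diagonal column by
column. The inequality `TS ≤ ST` gives the reverse `w (i+1) t k i ≤ w (k+1) t (k+1) (i+1)`; as `w`
decreases, `w (m+i+1) t (m+k) (m+i)` then grows with `m` for `i < k`, while it is at most
`w (m+i+1) ‖T‖ → 0`.

Upper triangular operators form a closed subalgebra, which therefore contains every `C` in the
closed algebra generated by such `T`. With `tail j` the coordinate projection onto the closed span
of `e j, e (j+1), …`, triangularity reads `tail j * C * tail j = tail j * C`, while
`tail j * S = S * tail (j+1)` and `‖S * tail (j+1)‖ ≤ w (j+1)`. Hence `‖(CS)^n‖ ≤ ∏_{s<n} ‖C‖ w (s+1)`, whose `n`-th root tends to `0`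
because `w n → 0`.
-/

open Filter Topology Finset

theorem tendsto_rpow_one_div_of_le_prod {a v : ℕ → ℝ} (ha : ∀ n, 0 ≤ a n)
    (hv : ∀ s, 0 ≤ v s) (hv0 : Tendsto v atTop (𝓝 0))
    (hav : ∀ n, a n ≤ ∏ s ∈ range n, v s) :
    Tendsto (fun n : ℕ => a n ^ (1 / (n : ℝ))) atTop (𝓝 0) := by
  refine tendsto_order.2 ⟨fun b hb => .of_forall fun n => hb.trans_le
    (Real.rpow_nonneg (ha n) _), fun ε hε => ?_⟩
  set δ := ε / 2
  have hδ : 0 < δ := half_pos hε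
  obtain ⟨N, hN⟩ := eventually_atTop.1 (hv0.eventually (gt_mem_nhds hδ))
  set P := ∏ s ∈ range N, v s
  have hP : 0 ≤ P := prod_nonneg fun s _ => hv s
  set K := P / δ ^ N + 1
  have hK : 0 < K := by positivity
  have hKroot : Tendsto (fun n : ℕ => K ^ (1 / (n : ℝ))) atTop (𝓝 1) := by
    have h := ((Real.continuousAt_const_rpow hK.ne').tendsto).comp
      tendsto_one_div_atTop_nhds_zero_nat
    rwa [Real.rpow_zero] at h
  filter_upwards [eventually_ge_atTop (max N 1), hKroot.eventually (gt_mem_nhds one_lt_two)]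
    with n hn hKn
  have hnN : N ≤ n := le_of_max_le_left hn
  have hbound : a n ≤ K * δ ^ n := calc
    a n ≤ ∏ s ∈ range n, v s := hav n
    _ = P * ∏ s ∈ range (n - N), v (N + s) := by
      rw [← prod_range_add, Nat.add_sub_cancel' hnN]
    _ ≤ P * ∏ s ∈ range (n - N), δ := by
      gcongr with s
      · exact fun s _ => hv _
      · exact (hN _ (Nat.le_add_right N s)).le
    _ = P / δ ^ N * δ ^ n := by
      rw [prod_const, card_range, pow_sub₀ _ hδ.ne' hnN]
      ring
    _ ≤ K * δ ^ n := by gcongr; linarith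
  calc a n ^ (1 / (n : ℝ)) ≤ (K * δ ^ n) ^ (1 / (n : ℝ)) := by gcongr; exact ha n
    _ = K ^ (1 / (n : ℝ)) * δ := by
      rw [Real.mul_rpow hK.le (by positivity), one_div,
        Real.pow_rpow_inv_natCast hδ.le (by omega), ← one_div]
    _ < 2 * δ := by gcongr
    _ = ε := by ring

local notation "ℓ²" => lp (fun _ : ℕ => ℝ) 2

namespace Donoghue

theorem hasSum_sq {ι : Type*} (x : lp (fun _ : ι => ℝ) 2) :
    HasSum (fun i => x i ^ 2) (‖x‖ ^ 2) := by
  have h := lp.hasSum_norm (p := 2) (by norm_num) x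
  rw [show (2 : ENNReal).toReal = 2 by norm_num] at h
  simpa only [Real.rpow_two, Real.norm_eq_abs, sq_abs] using h

theorem norm_le_of_abs_le_apply_succ {u v : ℓ²} {c : ℝ} (hc : 0 ≤ c)
    (h : ∀ k, |u k| ≤ c * |v (k + 1)|) : ‖u‖ ≤ c * ‖v‖ := by
  have hv : HasSum (fun k => c ^ 2 * v (k + 1) ^ 2) (c ^ 2 * (‖v‖ ^ 2 - v 0 ^ 2)) := by
    have h := (hasSum_nat_add_iff' (f := fun k => v k ^ 2) 1).2 (hasSum_sq v)
    rw [sum_range_one] at h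
    exact h.mul_left _
  refine pow_le_pow_iff_left₀ (norm_nonneg u) (by positivity) two_ne_zero |>.1 ?_
  calc ‖u‖ ^ 2 ≤ c ^ 2 * (‖v‖ ^ 2 - v 0 ^ 2) := hasSum_le (fun k => ?_) (hasSum_sq u) hv
    _ ≤ (c * ‖v‖) ^ 2 := by nlinarith [sq_nonneg (v 0), sq_nonneg c]
  calc u k ^ 2 = |u k| ^ 2 := (sq_abs _).symm
    _ ≤ (c * |v (k + 1)|) ^ 2 := pow_le_pow_left₀ (abs_nonneg _) (h k) 2
    _ = c ^ 2 * v (k + 1) ^ 2 := by rw [mul_pow, sq_abs]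

theorem single_apply (i k : ℕ) : (lp.single 2 i (1 : ℝ) : ℓ²) k = if k = i then 1 else 0 := by
  simp [lp.single_apply, Pi.single_apply]

theorem single_nonneg (i k : ℕ) : 0 ≤ (lp.single 2 i (1 : ℝ) : ℓ²) k := by
  rw [single_apply]; split_ifs <;> norm_num

theorem abs_apply_single_apply_le (T : ℓ² →L[ℝ] ℓ²) (i k : ℕ) :
    |T (lp.single 2 i 1) k| ≤ ‖T‖ := calc
  |T (lp.single 2 i 1) k| ≤ ‖T (lp.single 2 i 1)‖ := by
    simpa using lp.norm_apply_le_norm two_ne_zero (T (lp.single 2 i 1)) k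
  _ ≤ ‖T‖ * ‖(lp.single 2 i 1 : ℓ²)‖ := T.le_opNorm _
  _ = ‖T‖ := by rw [lp.norm_single (by norm_num), norm_one, mul_one]

theorem hasSum_apply_mul_apply_single (T : ℓ² →L[ℝ] ℓ²) (x : ℓ²) (k : ℕ) :
    HasSum (fun i => x i * T (lp.single 2 i 1) k) (T x k) := by
  have hs (i : ℕ) : lp.single 2 i (x i) = x i • (lp.single 2 i 1 : ℓ²) := by
    rw [← lp.single_smul, smul_eq_mul, mul_one]
  have h := (lp.hasSum_single (by norm_num) x).mapL ((lp.evalCLM ℝ _ 2 k).comp T)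
  simpa [hs, lp.evalCLM] using h

/-- `T` maps each `span {e i | i < n}` into itself: its matrix is upper triangular. -/
def IsUpperTriangular (T : ℓ² →L[ℝ] ℓ²) : Prop :=
  ∀ n (x : ℓ²), (∀ k, n ≤ k → x k = 0) → ∀ k, n ≤ k → T x k = 0

def upperTriangular : Subalgebra ℝ (ℓ² →L[ℝ] ℓ²) where
  carrier := {T | IsUpperTriangular T}
  mul_mem' hT hU n x hx := hT n _ (hU n x hx)
  add_mem' hT hU n x hx k hk := by simp [hT n x hx k hk, hU n x hx k hk]
  algebraMap_mem' r n x hx k hk := by simp [Algebra.algebraMap_eq_smul_one, hx k hk]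

theorem isClosed_upperTriangular : IsClosed (upperTriangular : Set (ℓ² →L[ℝ] ℓ²)) := by
  simp only [upperTriangular, IsUpperTriangular, Subalgebra.coe_mk, Set.ofPred_forall]
  exact isClosed_iInter fun n => isClosed_iInter fun x => isClosed_iInter fun _ =>
    isClosed_iInter fun k => isClosed_iInter fun _ =>
      isClosed_eq ((lp.evalCLM ℝ _ 2 k).continuous.comp (continuous_eval_const x))
        continuous_const

theorem isUpperTriangular_of_apply_single {T : ℓ² →L[ℝ] ℓ²}
    (hT : ∀ i k, i < k → T (lp.single 2 i 1) k = 0) : IsUpperTriangular T := by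
  intro n x hx k hk
  have hterm : (fun i => x i * T (lp.single 2 i 1) k) = 0 := by
    funext i
    rcases le_or_gt n i with hi | hi
    · rw [hx i hi, zero_mul, Pi.zero_apply]
    · rw [hT i k (hi.trans_le hk), mul_zero, Pi.zero_apply]
  have h := hasSum_apply_mul_apply_single T x k
  rw [hterm] at h
  exact h.unique hasSum_zero

noncomputable def tail (j : ℕ) : ℓ² →L[ℝ] ℓ² :=
  LinearMap.mkContinuous
    { toFun := fun x => ⟨fun k => if j ≤ k then x k else 0,
        (lp.memℓp x).mono' fun k => by split_ifs <;> simp⟩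
      map_add' := fun x y => by ext k; simp only [lp.coeFn_add]; split_ifs <;> simp [*]
      map_smul' := fun c x => by ext k; simp only [lp.coeFn_smul]; split_ifs <;> simp [*] }
    1 fun x => by
      rw [one_mul]
      exact lp.norm_mono two_ne_zero fun k =>
        show ‖if j ≤ k then x k else 0‖ ≤ ‖x k‖ by split_ifs <;> simp

theorem tail_apply (j : ℕ) (x : ℓ²) (k : ℕ) : tail j x k = if j ≤ k then x k else 0 := rfl

theorem norm_tail_le (j : ℕ) : ‖tail j‖ ≤ 1 :=
  LinearMap.mkContinuous_norm_le _ zero_le_one _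

theorem tail_zero : tail 0 = 1 := by
  ext x k
  simp [tail_apply]

theorem tail_mul_tail (j : ℕ) : tail j * tail j = tail j := by
  ext x k
  simp only [mul_apply_eq_comp, tail_apply]
  split_ifs <;> rfl

theorem IsUpperTriangular.tail_mul_mul_tail {C : ℓ² →L[ℝ] ℓ²} (hC : IsUpperTriangular C)
    (j : ℕ) : tail j * C * tail j = tail j * C := by
  ext x k
  simp only [mul_apply_eq_comp, tail_apply]
  split_ifs with hk
  · have hlow : ∀ i, j ≤ i → (x - tail j x) i = 0 := fun i hi => by
      simp [tail_apply, hi]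
    have h := hC j _ hlow k hk
    rw [map_sub, lp.coeFn_sub, Pi.sub_apply, sub_eq_zero] at h
    exact h.symm
  · rfl

section Shift

variable {w : ℕ → ℝ} {S T : ℓ² →L[ℝ] ℓ²}

theorem apply_eq_of_apply_single (hS0 : S (lp.single 2 0 1) = 0)
    (hSn : ∀ n : ℕ, S (lp.single 2 (n + 1) 1) = w (n + 1) • lp.single 2 n 1) (x : ℓ²) (k : ℕ) :
    S x k = w (k + 1) * x (k + 1) := by
  refine (hasSum_apply_mul_apply_single S x k).unique ?_
  convert hasSum_ite_eq (k + 1) (w (k + 1) * x (k + 1)) using 1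
  funext i
  rcases i with _ | i
  · simp [hS0]
  · simp only [hSn, lp.coeFn_smul, Pi.smul_apply, single_apply, smul_eq_mul, add_left_inj]
    by_cases h : i = k
    · simp [h, mul_comm]
    · simp [h, Ne.symm h]

theorem isUpperTriangular_of_shift_mul_le (hw : ∀ n : ℕ, 0 < w (n + 1))
    (hS0 : S (lp.single 2 0 1) = 0)
    (hSn : ∀ n : ℕ, S (lp.single 2 (n + 1) 1) = w (n + 1) • lp.single 2 n 1)
    (hTpos : ∀ x : ℓ², (∀ k, 0 ≤ x k) → ∀ k, 0 ≤ T x k)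
    (hST : ∀ x : ℓ², (∀ k, 0 ≤ x k) → ∀ k, (S * T) x k ≤ (T * S) x k) :
    IsUpperTriangular T := by
  set t : ℕ → ℕ → ℝ := fun k i => T (lp.single 2 i 1) k
  have hST_single (i k : ℕ) : w (k + 1) * t (k + 1) i ≤ (T * S) (lp.single 2 i 1) k := by
    simpa [apply_eq_of_apply_single hS0 hSn] using hST _ (single_nonneg i) k
  have hvanish {i k : ℕ} (h : w (k + 1) * t (k + 1) i ≤ 0) : t (k + 1) i = 0 :=
    le_antisymm (nonpos_of_mul_nonpos_right h (hw k)) (hTpos _ (single_nonneg i) _)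
  refine isUpperTriangular_of_apply_single fun i => ?_
  induction i with
  | zero =>
    rintro (_ | k) hk
    · omega
    · exact hvanish (by simpa [hS0] using hST_single 0 k)
  | succ i ih =>
    rintro (_ | k) hk
    · omega
    · refine hvanish ((hST_single (i + 1) k).trans_eq ?_)
      simp [hSn, ih k (by omega)]

theorem isUpperTriangular_of_le_shift_mul (hw : ∀ n : ℕ, 0 < w (n + 1))
    (hmono : ∀ n : ℕ, w (n + 2) ≤ w (n + 1))
    (hw0 : Tendsto (fun n => w (n + 1)) atTop (𝓝 0))
    (hS0 : S (lp.single 2 0 1) = 0)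
    (hSn : ∀ n : ℕ, S (lp.single 2 (n + 1) 1) = w (n + 1) • lp.single 2 n 1)
    (hTpos : ∀ x : ℓ², (∀ k, 0 ≤ x k) → ∀ k, 0 ≤ T x k)
    (hTS : ∀ x : ℓ², (∀ k, 0 ≤ x k) → ∀ k, (T * S) x k ≤ (S * T) x k) :
    IsUpperTriangular T := by
  set t : ℕ → ℕ → ℝ := fun k i => T (lp.single 2 i 1) k
  have ht (k i : ℕ) : 0 ≤ t k i := hTpos _ (single_nonneg i) k
  have hstep (i k : ℕ) : w (i + 1) * t k i ≤ w (k + 1) * t (k + 1) (i + 1) := by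
    simpa [hSn, apply_eq_of_apply_single hS0 hSn] using hTS _ (single_nonneg (i + 1)) k
  have hanti : Antitone fun n => w (n + 1) := antitone_nat_of_succ_le hmono
  refine isUpperTriangular_of_apply_single fun i k hik => ?_
  have hdiag (m : ℕ) : w (i + 1) * t k i ≤ w (m + i + 1) * t (m + k) (m + i) := by
    induction m with
    | zero => simp
    | succ m ih => calc
      _ ≤ w (m + i + 1) * t (m + k) (m + i) := ih
      _ ≤ w (m + k + 1) * t (m + k + 1) (m + i + 1) := hstep _ _
      _ ≤ w (m + 1 + i + 1) * t (m + 1 + k) (m + 1 + i) := by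
        rw [show m + 1 + k = m + k + 1 by omega, show m + 1 + i = m + i + 1 by omega]
        exact mul_le_mul_of_nonneg_right (hanti (by omega)) (ht _ _)
  have hlim : Tendsto (fun m => w (m + i + 1) * ‖T‖) atTop (𝓝 0) := by
    simpa using ((tendsto_add_atTop_iff_nat i).2 hw0).mul_const ‖T‖
  have hle : w (i + 1) * t k i ≤ 0 := ge_of_tendsto' hlim fun m =>
    (hdiag m).trans (mul_le_mul_of_nonneg_left
      ((le_abs_self _).trans (abs_apply_single_apply_le T _ _)) (hw _).le)
  exact le_antisymm (nonpos_of_mul_nonpos_right hle (hw i)) (ht k i)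

theorem tail_mul_shift (hS : ∀ x k, S x k = w (k + 1) * x (k + 1)) (j : ℕ) :
    tail j * S = S * tail (j + 1) := by
  ext x k
  simp only [mul_apply_eq_comp, tail_apply, hS, add_le_add_iff_right]
  split_ifs <;> simp

theorem norm_shift_mul_tail_le (hw : ∀ n : ℕ, 0 < w (n + 1))
    (hmono : ∀ n : ℕ, w (n + 2) ≤ w (n + 1)) (hS : ∀ x k, S x k = w (k + 1) * x (k + 1))
    (j : ℕ) : ‖S * tail (j + 1)‖ ≤ w (j + 1) := by
  refine ContinuousLinearMap.opNorm_le_bound _ (hw j).le fun x =>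
    norm_le_of_abs_le_apply_succ (hw j).le fun k => ?_
  rw [mul_apply_eq_comp, hS, tail_apply, abs_mul, abs_of_pos (hw k)]
  split_ifs with hk
  · exact mul_le_mul_of_nonneg_right
      (antitone_nat_of_succ_le (f := fun n => w (n + 1)) hmono (by omega)) (abs_nonneg _)
  · simp only [abs_zero, mul_zero]
    exact mul_nonneg (hw j).le (abs_nonneg _)

theorem norm_tail_mul_pow_le (hw : ∀ n : ℕ, 0 < w (n + 1))
    (hmono : ∀ n : ℕ, w (n + 2) ≤ w (n + 1)) (hS : ∀ x k, S x k = w (k + 1) * x (k + 1))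
    {C : ℓ² →L[ℝ] ℓ²} (hC : IsUpperTriangular C) (m j : ℕ) :
    ‖tail j * (C * S) ^ m‖ ≤ ∏ s ∈ range m, ‖C‖ * w (j + s + 1) := by
  induction m generalizing j with
  | zero => simpa using norm_tail_le j
  | succ m ih =>
    have hsplit : tail j * (C * S) ^ (m + 1) =
        tail j * C * (S * tail (j + 1)) * (tail (j + 1) * (C * S) ^ m) := calc
      _ = tail j * C * tail j * S * (C * S) ^ m := by
        rw [hC.tail_mul_mul_tail, pow_succ']; simp only [mul_assoc]
      _ = tail j * C * (tail j * S) * (C * S) ^ m := by simp only [mul_assoc]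
      _ = tail j * C * (S * tail (j + 1) * tail (j + 1)) * (C * S) ^ m := by
        rw [tail_mul_shift hS, mul_assoc S, tail_mul_tail]
      _ = _ := by simp only [mul_assoc]
    have hreindex (s : ℕ) : j + 1 + s + 1 = j + (s + 1) + 1 := by omega
    have hC' : ‖tail j * C‖ ≤ ‖C‖ :=
      (norm_mul_le _ _).trans (mul_le_of_le_one_left (norm_nonneg C) (norm_tail_le j))
    calc ‖tail j * (C * S) ^ (m + 1)‖
        ≤ ‖tail j * C‖ * ‖S * tail (j + 1)‖ * ‖tail (j + 1) * (C * S) ^ m‖ :=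
          hsplit ▸ norm_mul₃_le
      _ ≤ ‖C‖ * w (j + 1) * ∏ s ∈ range m, ‖C‖ * w (j + 1 + s + 1) :=
          mul_le_mul (mul_le_mul hC' (norm_shift_mul_tail_le hw hmono hS j) (norm_nonneg _)
            (norm_nonneg C))
            (ih (j + 1)) (norm_nonneg _) (mul_nonneg (norm_nonneg C) (hw j).le)
      _ = ∏ s ∈ range (m + 1), ‖C‖ * w (j + s + 1) := by
          rw [prod_range_succ', add_zero]
          simp only [hreindex]
          ring

theorem norm_pow_le (hw : ∀ n : ℕ, 0 < w (n + 1))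
    (hmono : ∀ n : ℕ, w (n + 2) ≤ w (n + 1)) (hS : ∀ x k, S x k = w (k + 1) * x (k + 1))
    {C : ℓ² →L[ℝ] ℓ²} (hC : IsUpperTriangular C) (m : ℕ) :
    ‖(C * S) ^ m‖ ≤ ∏ s ∈ range m, ‖C‖ * w (s + 1) := by
  simpa [tail_zero] using norm_tail_mul_pow_le hw hmono hS hC m 0

end Shift

end Donoghue

open Donoghue

/-- A Donoghue operator `S` on `ℓ²` lies in the radical of the Banach algebra generated by
`⟨S] ∪ [S⟩`: for every `C` in the closed unital subalgebra of bounded operators on `ℓ²`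
generated by the positive operators semi-commuting with `S`, the operator `CS` is
quasinilpotent. -/
theorem donoghue_in_radical
    (w : ℕ → ℝ) (hw : ∀ n : ℕ, 0 < w (n + 1))
    (hmono : ∀ n : ℕ, w (n + 2) ≤ w (n + 1))
    (hsum : Summable fun n : ℕ => w (n + 1) ^ 2)
    (S : lp (fun _ : ℕ => ℝ) 2 →L[ℝ] lp (fun _ : ℕ => ℝ) 2)
    (hS0 : S (lp.single 2 0 (1 : ℝ)) = 0)
    (hSn : ∀ n : ℕ, S (lp.single 2 (n + 1) (1 : ℝ)) = w (n + 1) • lp.single 2 n (1 : ℝ)) :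
    ∀ C ∈ (Algebra.adjoin ℝ
        {T : lp (fun _ : ℕ => ℝ) 2 →L[ℝ] lp (fun _ : ℕ => ℝ) 2 |
          (∀ x : lp (fun _ : ℕ => ℝ) 2, (∀ k, 0 ≤ x k) → ∀ k, 0 ≤ (T x) k) ∧
          ((∀ x : lp (fun _ : ℕ => ℝ) 2, (∀ k, 0 ≤ x k) →
              ∀ k, ((S * T) x) k ≤ ((T * S) x) k) ∨
           (∀ x : lp (fun _ : ℕ => ℝ) 2, (∀ k, 0 ≤ x k) →
              ∀ k, ((T * S) x) k ≤ ((S * T) x) k))}).topologicalClosure,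
      Filter.Tendsto (fun n : ℕ => ‖(C * S) ^ n‖ ^ (1 / (n : ℝ)))
        Filter.atTop (nhds 0) := by
  intro C hC
  have hw0 : Tendsto (fun n => w (n + 1)) atTop (𝓝 0) := by
    simpa [Real.sqrt_sq (hw _).le] using hsum.tendsto_atTop_zero.sqrt
  have hCtri : IsUpperTriangular C := by
    refine Subalgebra.topologicalClosure_minimal (Algebra.adjoin_le ?_)
      isClosed_upperTriangular hC
    rintro T ⟨hTpos, hST | hTS⟩
    · exact isUpperTriangular_of_shift_mul_le hw hS0 hSn hTpos hST
    · exact isUpperTriangular_of_le_shift_mul hw hmono hw0 hS0 hSn hTpos hTS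
  refine tendsto_rpow_one_div_of_le_prod (fun n => norm_nonneg _)
    (fun s => mul_nonneg (norm_nonneg C) (hw s).le) ?_
    (norm_pow_le hw hmono (apply_eq_of_apply_single hS0 hSn) hCtri)
  simpa using hw0.const_mul ‖C‖
end
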